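/- arXiv:0711.4940 — 7 statements merged into one kernel-verified Lean document; each statement's English description precedes it below -/
import Mathlib

section
/- For every nonnegative integer m, the identity ∑_{k=0}^{m} (-1)^k * binom(m/2, k) * (1-b)^k = b^m * ∑_{k=0}^{m} binom(m/2, k) * (1-b)^k * b^{-k} holds for all real b ≠ 0, where binom(m/2, k) denotes the generalized binomial coefficient with real upper argument m/2. -/
/-- Generalized binomial coefficient `x(x-1)⋯(x-k+1)/k!` with real upper argument. -/
noncomputable def gchoose (x : ℝ) (k : ℕ) : ℝ :=
  (∏ i ∈ Finset.range k, (x - i)) / (Nat.factorial k)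

/-!
Put `u = 1 - b` and `x = m / 2`. Since `b ^ m * b ^ (-k) = (1 - u) ^ (m - k)`, the right-hand side
is `∑ₖ C(x, k) uᵏ (1 - u)ᵐ⁻ᵏ`. Expanding `(1 - u)ᵐ⁻ᵏ`, the coefficient of `uⁿ` for `n ≤ m` is
`∑ₖ C(x, k) C(m - k, n - k) (-1)ⁿ⁻ᵏ`. Upper negation turns `C(m - k, n - k) (-1)ⁿ⁻ᵏ` into
`C(n - m - 1, n - k)`, so by Vandermonde's identity the coefficient is
`C(x + n - m - 1, n) = (-1)ⁿ C(m - x, n)`, and `m - x = x` exactly when `x = m / 2`.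
-/

open Finset

namespace Ring

variable {R : Type*} [CommRing R] [BinomialRing R]

theorem choose_sub_sub_one_eq_neg_one_pow_mul_choose {m n k : ℕ} (hkn : k ≤ n) (hnm : n ≤ m) :
    choose ((n : R) - m - 1) (n - k) = (-1) ^ (n - k) * ((m - k).choose (n - k) : R) := by
  have h := choose_neg ((m : R) - n + 1) (n - k)
  rw [show -((m : R) - n + 1) = n - m - 1 by ring,
    show (m : R) - n + 1 + ((n - k : ℕ) : R) - 1 = ((m - k : ℕ) : R) by
      push_cast [Nat.cast_sub hkn, Nat.cast_sub (hkn.trans hnm)]; ring,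
    choose_natCast, Int.negOnePow_def, Units.smul_def, zsmul_eq_mul] at h
  simpa using h

theorem sum_choose_mul_choose_mul_neg_one_pow (r : R) {m n : ℕ} (hnm : n ≤ m) :
    ∑ k ∈ range (n + 1), choose r k * ((m - k).choose (n - k) : R) * (-1) ^ (n - k)
      = (-1) ^ n * choose ((m : R) - r) n := by
  have h_upper : ∀ k ∈ range (n + 1),
      choose r k * ((m - k).choose (n - k) : R) * (-1) ^ (n - k)
        = choose r k * choose ((n : R) - m - 1) (n - k) := by
    intro k hk
    rw [choose_sub_sub_one_eq_neg_one_pow_mul_choose (mem_range_succ_iff.mp hk) hnm]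
    ring
  rw [sum_congr rfl h_upper, ← Nat.sum_antidiagonal_eq_sum_range_succ
    (fun a b => choose r a * choose ((n : R) - m - 1) b), ← add_choose_eq n (Commute.all _ _),
    show r + ((n : R) - m - 1) = -((m - r) - n + 1) by ring, choose_neg,
    show (m : R) - r - n + 1 + n - 1 = m - r by ring, Int.negOnePow_def, Units.smul_def,
    zsmul_eq_mul]
  simp

theorem sum_choose_mul_pow_mul_one_sub_pow (r u : R) (m : ℕ) :
    ∑ k ∈ range (m + 1), choose r k * u ^ k * (1 - u) ^ (m - k)
      = ∑ n ∈ range (m + 1), (-1) ^ n * choose ((m : R) - r) n * u ^ n := by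
  calc ∑ k ∈ range (m + 1), choose r k * u ^ k * (1 - u) ^ (m - k)
      = ∑ k ∈ range (m + 1), ∑ j ∈ range (m + 1 - k),
          choose r k * ((m - k).choose j : R) * (-1) ^ j * u ^ (k + j) := by
        refine sum_congr rfl fun k hk => ?_
        rw [show 1 - u = -u + 1 by ring, add_pow, mul_sum,
          show m + 1 - k = m - k + 1 by have := mem_range.mp hk; omega]
        refine sum_congr rfl fun j _ => ?_
        rw [neg_pow, pow_add]
        ring
    _ = ∑ n ∈ range (m + 1), ∑ k ∈ range (n + 1),
          choose r k * ((m - k).choose (n - k) : R) * (-1) ^ (n - k) * u ^ n := by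
        rw [← sum_range_diag_flip]
        refine sum_congr rfl fun n _ => sum_congr rfl fun k hk => ?_
        rw [Nat.add_sub_cancel' (mem_range_succ_iff.mp hk)]
    _ = ∑ n ∈ range (m + 1), (-1) ^ n * choose ((m : R) - r) n * u ^ n := by
        refine sum_congr rfl fun n hn => ?_
        rw [← sum_mul, sum_choose_mul_choose_mul_neg_one_pow r (mem_range_succ_iff.mp hn)]

end Ring

theorem gchoose_eq_ringChoose (x : ℝ) (k : ℕ) : gchoose x k = Ring.choose x k := by
  have h := Ring.descPochhammer_eq_factorial_smul_choose x k
  rw [← Polynomial.aeval_eq_smeval, Polynomial.aeval_def, ← Polynomial.eval_map,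
    descPochhammer_map, descPochhammer_eval_eq_prod_range, nsmul_eq_mul] at h
  rw [gchoose, h, mul_div_cancel_left₀ _ (by positivity)]

theorem stmt0 (m : ℕ) (b : ℝ) (hb : b ≠ 0) :
    ∑ k ∈ Finset.range (m + 1), (-1 : ℝ) ^ k * gchoose ((m : ℝ) / 2) k * (1 - b) ^ k
      = b ^ m * ∑ k ∈ Finset.range (m + 1),
          gchoose ((m : ℝ) / 2) k * (1 - b) ^ k * b ^ (-(k : ℤ)) := by
  have h := Ring.sum_choose_mul_pow_mul_one_sub_pow ((m : ℝ) / 2) (1 - b) m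
  rw [show (m : ℝ) - m / 2 = m / 2 by ring, sub_sub_cancel] at h
  simp only [gchoose_eq_ringChoose, ← h, mul_sum]
  refine sum_congr rfl fun k hk => ?_
  rw [zpow_neg, zpow_natCast, pow_sub₀ b hb (mem_range_succ_iff.mp hk)]
  ring
end

section
/- Let m₂ < m₁ be nonnegative integers with n = m₁+m₂+1 and f(x) = x^{n+1} = x^{m₁+m₂+2} on an interval containing 0 < a < b. With P, Q the Hermite interpolants of degree ≤ n as in the standard setup (P matches f to order m₁ at a and order m₂ at b; Q matches to order m₂ at a and order m₁ at b), the unique solution x₀ ∈ (a,b) of (f - P)(x) = (-1)^{m₁-m₂}(f - Q)(x) is x₀ = (a+b)/2. -/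
/-!
Since `x ^ (m₁ + m₂ + 2)` is monic of degree `n + 1`, so is the error `f - P`; it vanishes to
order `m₁ + 1` at `a` and `m₂ + 1` at `b`, hence equals the nodal polynomial
`(x - a) ^ (m₁ + 1) * (x - b) ^ (m₂ + 1)`, and symmetrically for `Q`. With `u = x - a > 0` and
`v = b - x > 0` the signs cancel and the equation becomes
`u ^ (m₁ + 1) * v ^ (m₂ + 1) = u ^ (m₂ + 1) * v ^ (m₁ + 1)`, i.e. `u ^ (m₁ - m₂) = v ^ (m₁ - m₂)`,
i.e. `u = v`.
-/

open Polynomial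

theorem Polynomial.iteratedDeriv_eval {𝕜 : Type*} [NontriviallyNormedField 𝕜] (p : 𝕜[X])
    (j : ℕ) :
    iteratedDeriv j (fun t => p.eval t) = fun t => (derivative^[j] p).eval t := by
  induction j generalizing p with
  | zero => simp
  | succ j ih =>
    rw [iteratedDeriv_succ', Function.iterate_succ_apply, ← ih]
    have hderiv : deriv (fun t => p.eval t) = fun t => p.derivative.eval t :=
      _root_.funext fun _ => p.deriv
    rw [hderiv]

theorem Polynomial.pow_X_sub_C_dvd_of_iterate_derivative_eval_eq_zero {R : Type*} [CommRing R]
    [IsDomain R] [CharZero R] {p : R[X]} {t : R} {n : ℕ}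
    (h : ∀ m ≤ n, (derivative^[m] p).eval t = 0) : (X - C t) ^ (n + 1) ∣ p := by
  rcases eq_or_ne p 0 with rfl | hp
  · exact dvd_zero _
  exact (le_rootMultiplicity_iff hp).1 ((lt_rootMultiplicity_iff_isRoot_iterate_derivative hp).2 h)

theorem Polynomial.sub_eq_of_hermite_interpolation {K : Type*} [Field K] [CharZero K] {a b : K}
    (hab : a ≠ b) {r s : ℕ} {F P : K[X]} (hF : F.Monic) (hFdeg : F.natDegree = r + s + 2)
    (hP : P.natDegree ≤ r + s + 1)
    (ha : ∀ j ≤ r, (derivative^[j] P).eval a = (derivative^[j] F).eval a)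
    (hb : ∀ j ≤ s, (derivative^[j] P).eval b = (derivative^[j] F).eval b) :
    F - P = (X - C a) ^ (r + 1) * (X - C b) ^ (s + 1) := by
  have hPF : P.natDegree < F.natDegree := by omega
  have hW : ((X - C a) ^ (r + 1) * (X - C b) ^ (s + 1)).Monic :=
    ((monic_X_sub_C a).pow _).mul ((monic_X_sub_C b).pow _)
  have hcop : IsCoprime ((X - C a) ^ (r + 1)) ((X - C b) ^ (s + 1)) :=
    (isCoprime_X_sub_C_of_isUnit_sub (sub_ne_zero.2 hab).isUnit).pow
  refine eq_of_monic_of_dvd_of_natDegree_le hW (hF.sub_of_left (degree_lt_degree hPF))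
    (hcop.mul_dvd ?_ ?_) ?_
  · exact pow_X_sub_C_dvd_of_iterate_derivative_eval_eq_zero fun j hj => by simp [ha j hj]
  · exact pow_X_sub_C_dvd_of_iterate_derivative_eval_eq_zero fun j hj => by simp [hb j hj]
  · rw [natDegree_sub_eq_left_of_natDegree_lt hPF, ((monic_X_sub_C a).pow _).natDegree_mul
      ((monic_X_sub_C b).pow _)]
    simp only [natDegree_pow, natDegree_X_sub_C]
    omega

theorem pow_add_mul_pow_eq_pow_mul_pow_add_iff {R : Type*} [Field R] [LinearOrder R]
    [IsStrictOrderedRing R] {u v : R} (hu : 0 < u) (hv : 0 < v) {n k : ℕ}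
    (hk : k ≠ 0) : u ^ (n + k) * v ^ n = u ^ n * v ^ (n + k) ↔ u = v := by
  rw [pow_add, pow_add, mul_right_comm, mul_assoc, mul_right_inj' (pow_ne_zero n hu.ne'),
    mul_right_inj' (pow_ne_zero n hv.ne'), pow_left_inj₀ hu.le hv.le hk]

theorem pow_mul_neg_pow_eq_neg_one_pow_mul_iff {R : Type*} [Field R] [LinearOrder R]
    [IsStrictOrderedRing R] {u v : R} (hu : 0 < u) (hv : 0 < v) {p q : ℕ}
    (hqp : q < p) : u ^ p * (-v) ^ q = (-1) ^ (p - q) * (u ^ q * (-v) ^ p) ↔ u = v := by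
  obtain ⟨k, rfl⟩ : ∃ k, p = q + k := ⟨p - q, by omega⟩
  have hsign : ((-1 : R) ^ k) ^ 2 = 1 := by rw [← pow_mul, mul_comm, pow_mul, neg_one_sq, one_pow]
  have hrhs : (-1) ^ k * (u ^ q * (-v) ^ (q + k)) = (-1) ^ q * (u ^ q * v ^ (q + k)) := by
    rw [neg_pow v, pow_add (-1 : R)]
    linear_combination (-1) ^ q * u ^ q * v ^ (q + k) * hsign
  rw [Nat.add_sub_cancel_left, hrhs, neg_pow v, mul_left_comm (u ^ (q + k)),
    mul_right_inj' (pow_ne_zero q (neg_ne_zero.2 one_ne_zero)),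
    pow_add_mul_pow_eq_pow_mul_pow_add_iff hu hv (by omega)]

theorem sub_eval_eq_of_hermite_interpolation_X_pow {r s : ℕ} {a b : ℝ} (hab : a ≠ b) {P : ℝ[X]}
    (hP : P.natDegree ≤ r + s + 1)
    (ha : ∀ j ≤ r,
      iteratedDeriv j (fun t => P.eval t) a = iteratedDeriv j (fun t => t ^ (r + s + 2)) a)
    (hb : ∀ j ≤ s,
      iteratedDeriv j (fun t => P.eval t) b = iteratedDeriv j (fun t => t ^ (r + s + 2)) b)
    (x : ℝ) : x ^ (r + s + 2) - P.eval x = (x - a) ^ (r + 1) * (x - b) ^ (s + 1) := by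
  have hX : (fun t : ℝ => t ^ (r + s + 2)) = fun t => (X ^ (r + s + 2) : ℝ[X]).eval t := by simp
  rw [hX] at ha hb
  simp only [iteratedDeriv_eval] at ha hb
  simpa using congrArg (eval x)
    (sub_eq_of_hermite_interpolation hab (monic_X_pow _) (natDegree_X_pow _) hP ha hb)

theorem stmt6_general (m₁ m₂ : ℕ) (hm : m₂ < m₁) (a b : ℝ) (hab : a < b)
    (f : ℝ → ℝ) (hfdef : f = fun x => x ^ (m₁ + m₂ + 2))
    (P Q : Polynomial ℝ) (hPdeg : P.natDegree ≤ m₁ + m₂ + 1) (hQdeg : Q.natDegree ≤ m₁ + m₂ + 1)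
    (hPa : ∀ j ≤ m₁, iteratedDeriv j (fun t => P.eval t) a = iteratedDeriv j f a)
    (hPb : ∀ j ≤ m₂, iteratedDeriv j (fun t => P.eval t) b = iteratedDeriv j f b)
    (hQa : ∀ j ≤ m₂, iteratedDeriv j (fun t => Q.eval t) a = iteratedDeriv j f a)
    (hQb : ∀ j ≤ m₁, iteratedDeriv j (fun t => Q.eval t) b = iteratedDeriv j f b) :
    ∀ x ∈ Set.Ioo a b,
      (f x - P.eval x = (-1 : ℝ) ^ (m₁ - m₂) * (f x - Q.eval x) ↔ x = (a + b) / 2) := by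
  rintro x ⟨hax, hxb⟩
  subst hfdef
  have hP := sub_eval_eq_of_hermite_interpolation_X_pow hab.ne hPdeg hPa hPb x
  rw [add_comm m₁ m₂] at hQdeg hQa hQb
  have hQ := sub_eval_eq_of_hermite_interpolation_X_pow hab.ne hQdeg hQa hQb x
  rw [add_comm m₂ m₁] at hQ
  rw [hP, hQ, show x - b = -(b - x) by ring, show m₁ - m₂ = (m₁ + 1) - (m₂ + 1) by omega,
    pow_mul_neg_pow_eq_neg_one_pow_mul_iff (sub_pos.2 hax) (sub_pos.2 hxb) (by omega)]
  constructor <;> intro h <;> linarith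

theorem stmt6 (m₁ m₂ : ℕ) (hm : m₂ < m₁) (a b : ℝ) (ha : 0 < a) (hab : a < b)
    (f : ℝ → ℝ) (hfdef : f = fun x => x ^ (m₁ + m₂ + 2))
    (P Q : Polynomial ℝ) (hPdeg : P.natDegree ≤ m₁ + m₂ + 1) (hQdeg : Q.natDegree ≤ m₁ + m₂ + 1)
    (hPa : ∀ j ≤ m₁, iteratedDeriv j (fun t => P.eval t) a = iteratedDeriv j f a)
    (hPb : ∀ j ≤ m₂, iteratedDeriv j (fun t => P.eval t) b = iteratedDeriv j f b)
    (hQa : ∀ j ≤ m₂, iteratedDeriv j (fun t => Q.eval t) a = iteratedDeriv j f a)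
    (hQb : ∀ j ≤ m₁, iteratedDeriv j (fun t => Q.eval t) b = iteratedDeriv j f b) :
    ∀ x ∈ Set.Ioo a b,
      (f x - P.eval x = (-1 : ℝ) ^ (m₁ - m₂) * (f x - Q.eval x) ↔ x = (a + b) / 2) :=
  stmt6_general m₁ m₂ hm a b hab f hfdef P Q hPdeg hQdeg hPa hPb hQa hQb
end

section
/- Let m₂ < m₁ be nonnegative integers and let 0 < a < b. With f(x) = 1/x and P, Q the Hermite interpolants of degree ≤ n = m₁+m₂+1 (P matches f to order m₁ at a and m₂ at b; Q matches to order m₂ at a and m₁ at b), the unique solution x₀ ∈ (a,b) of (f-P)(x) = (-1)^{m₁-m₂}(f-Q)(x) equals the harmonic mean 2ab/(a+b). -/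
/-!
Since `P` agrees with `1/x` to order `m₁` at `a` and to order `m₂` at `b`, the polynomial
`1 - X * P`, of degree at most `m₁ + m₂ + 2`, vanishes to order `m₁ + 1` at `a` and `m₂ + 1` at `b`.
It is therefore a constant multiple of `(X - a)^(m₁+1) (X - b)^(m₂+1)`, and its value `1` at `0`
gives `1 - x P(x) = (1 - x/a)^(m₁+1) (1 - x/b)^(m₂+1)`; symmetrically for `Q`. Cancelling the
common factor, the equation becomes `(x/a - 1)^(m₁-m₂) = (1 - x/b)^(m₁-m₂)` with both bases
positive on `(a, b)`, i.e. `x/a + x/b = 2`.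
-/

open Polynomial Filter Topology

namespace Polynomial

variable {𝕜 : Type*} [NontriviallyNormedField 𝕜]

theorem iteratedDeriv_eval_s7 (p : 𝕜[X]) (j : ℕ) :
    iteratedDeriv j (fun x => p.eval x) = fun x => (derivative^[j] p).eval x := by
  rw [iteratedDeriv_eq_iterate]
  induction j with
  | zero => rfl
  | succ j ih =>
    rw [Function.iterate_succ_apply', ih, Function.iterate_succ_apply']
    funext x
    exact (derivative^[j] p).deriv

theorem eval_iterate_derivative_X_mul_eq_of_iteratedDeriv_eq_inv {P : 𝕜[X]} {r : 𝕜}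
    (hr : r ≠ 0) {m : ℕ}
    (hP : ∀ j ≤ m, iteratedDeriv j (fun x => P.eval x) r = iteratedDeriv j (·⁻¹) r) :
    ∀ j ≤ m, (derivative^[j] (X * P)).eval r = (derivative^[j] 1).eval r := by
  intro j hj
  have hinv : (fun x : 𝕜 => x * x⁻¹) =ᶠ[𝓝 r] fun x => (1 : 𝕜[X]).eval x := by
    filter_upwards [isOpen_ne.mem_nhds hr] with x hx
    simp [mul_inv_cancel₀ hx]
  rw [← congrFun (iteratedDeriv_eval_s7 _ j), ← congrFun (iteratedDeriv_eval_s7 _ j),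
    ← hinv.iteratedDeriv_eq]
  simp only [eval_mul, eval_X]
  have hPsmooth : ContDiffAt 𝕜 j (fun x => P.eval x) r := by
    simpa using (P.contDiff_aeval (𝕜 := 𝕜) j).contDiffAt
  rw [iteratedDeriv_fun_mul contDiffAt_fun_id hPsmooth,
    iteratedDeriv_fun_mul contDiffAt_fun_id (contDiffAt_inv 𝕜 hr)]
  refine Finset.sum_congr rfl fun i _ => ?_
  rw [hP (j - i) (by omega)]

theorem pow_X_sub_C_dvd_one_sub_X_mul_of_iteratedDeriv_eq_inv [CharZero 𝕜] {P : 𝕜[X]} {r : 𝕜}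
    (hr : r ≠ 0) {m : ℕ}
    (hP : ∀ j ≤ m, iteratedDeriv j (fun x => P.eval x) r = iteratedDeriv j (·⁻¹) r) :
    (X - C r) ^ (m + 1) ∣ 1 - X * P := by
  have hne : (1 - X * P : 𝕜[X]) ≠ 0 := fun h => by simpa using congrArg (eval 0) h
  refine (pow_dvd_pow _ (lt_rootMultiplicity_of_isRoot_iterate_derivative hne fun j hj => ?_)).trans
    (pow_rootMultiplicity_dvd _ r)
  rw [IsRoot, iterate_derivative_sub, eval_sub,
    eval_iterate_derivative_X_mul_eq_of_iteratedDeriv_eq_inv hr hP j hj, sub_self]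

theorem one_sub_mul_eval_eq_of_iteratedDeriv_eq_inv [CharZero 𝕜] {P : 𝕜[X]} {a b : 𝕜}
    (ha : a ≠ 0) (hb : b ≠ 0) (hab : a ≠ b) {m k : ℕ} (hdeg : P.natDegree ≤ m + k + 1)
    (hPa : ∀ j ≤ m, iteratedDeriv j (fun x => P.eval x) a = iteratedDeriv j (·⁻¹) a)
    (hPb : ∀ j ≤ k, iteratedDeriv j (fun x => P.eval x) b = iteratedDeriv j (·⁻¹) b) (x : 𝕜) :
    1 - x * P.eval x = (1 - x / a) ^ (m + 1) * (1 - x / b) ^ (k + 1) := by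
  set D : 𝕜[X] := (X - C a) ^ (m + 1) * (X - C b) ^ (k + 1)
  have hD : D.Monic := ((monic_X_sub_C a).pow _).mul ((monic_X_sub_C b).pow _)
  have hDdeg : D.natDegree = m + k + 2 := by
    rw [((monic_X_sub_C a).pow _).natDegree_mul ((monic_X_sub_C b).pow _), natDegree_pow,
      natDegree_pow, natDegree_X_sub_C, natDegree_X_sub_C]
    ring
  have hdvd : D ∣ 1 - X * P :=
    ((isCoprime_X_sub_C_of_isUnit_sub (sub_ne_zero.mpr hab).isUnit).pow.mul_dvd
      (pow_X_sub_C_dvd_one_sub_X_mul_of_iteratedDeriv_eq_inv ha hPa)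
      (pow_X_sub_C_dvd_one_sub_X_mul_of_iteratedDeriv_eq_inv hb hPb))
  have hdeg' : (1 - X * P : 𝕜[X]).natDegree ≤ D.natDegree := by
    rw [hDdeg]
    refine (natDegree_sub_le _ _).trans (max_le (by simp) ((natDegree_mul_le).trans ?_))
    rw [natDegree_X]
    omega
  obtain ⟨c, hc⟩ : ∃ c, 1 - X * P = C c * D :=
    ⟨_, eq_leadingCoeff_mul_of_monic_of_dvd_of_natDegree_le hD hdvd hdeg'⟩
  have h0 := congrArg (eval 0) hc
  have hx := congrArg (eval x) hc
  simp only [D, eval_sub, eval_one, eval_mul, eval_X, eval_C, eval_pow] at h0 hx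
  have hc' : c = ((-a) ^ (m + 1) * (-b) ^ (k + 1))⁻¹ :=
    eq_inv_of_mul_eq_one_left (by simpa using h0.symm)
  have hnorm : ∀ r : 𝕜, r ≠ 0 → (x - r) / -r = 1 - x / r := fun r hr => by field_simp; ring
  rw [hx, ← hnorm a ha, ← hnorm b hb, div_pow, div_pow, hc']
  ring

end Polynomial

theorem pow_add_mul_pow_eq_neg_one_pow_mul_iff {K : Type*} [Field K] [LinearOrder K]
    [IsStrictOrderedRing K] {u v : K} (hu : u < 0) (hv : 0 < v) (n : ℕ) {k : ℕ} (hk : k ≠ 0) :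
    u ^ (n + k) * v ^ n = (-1) ^ k * (u ^ n * v ^ (n + k)) ↔ -u = v := by
  have hne : (u * v) ^ n * (-1) ^ k ≠ 0 :=
    mul_ne_zero (pow_ne_zero _ (mul_neg_of_neg_of_pos hu hv).ne) (pow_ne_zero _ (by norm_num))
  have hsq : ((-1 : K) ^ k) * (-1) ^ k = 1 := by rw [← mul_pow]; norm_num
  have hlhs : u ^ (n + k) * v ^ n = (u * v) ^ n * (-1) ^ k * (-u) ^ k := by
    rw [neg_pow, pow_add, mul_pow]
    linear_combination (-(u ^ n * u ^ k * v ^ n)) * hsq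
  have hrhs : (-1) ^ k * (u ^ n * v ^ (n + k)) = (u * v) ^ n * (-1) ^ k * v ^ k := by
    rw [pow_add, mul_pow]; ring
  rw [hlhs, hrhs, mul_right_inj' hne, pow_left_inj₀ (neg_nonneg.2 hu.le) hv.le hk]

theorem stmt7 (m₁ m₂ : ℕ) (hm : m₂ < m₁) (a b : ℝ) (ha : 0 < a) (hab : a < b)
    (f : ℝ → ℝ) (hfdef : f = fun x => 1 / x)
    (P Q : Polynomial ℝ) (hPdeg : P.natDegree ≤ m₁ + m₂ + 1) (hQdeg : Q.natDegree ≤ m₁ + m₂ + 1)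
    (hPa : ∀ j ≤ m₁, iteratedDeriv j (fun t => P.eval t) a = iteratedDeriv j f a)
    (hPb : ∀ j ≤ m₂, iteratedDeriv j (fun t => P.eval t) b = iteratedDeriv j f b)
    (hQa : ∀ j ≤ m₂, iteratedDeriv j (fun t => Q.eval t) a = iteratedDeriv j f a)
    (hQb : ∀ j ≤ m₁, iteratedDeriv j (fun t => Q.eval t) b = iteratedDeriv j f b) :
    ∀ x ∈ Set.Ioo a b,
      (f x - P.eval x = (-1 : ℝ) ^ (m₁ - m₂) * (f x - Q.eval x) ↔ x = 2 * a * b / (a + b)) := by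
  subst hfdef
  simp only [one_div] at hPa hPb hQa hQb ⊢
  have hb := ha.trans hab
  have hP := one_sub_mul_eval_eq_of_iteratedDeriv_eq_inv ha.ne' hb.ne' hab.ne hPdeg hPa hPb
  have hQ := one_sub_mul_eval_eq_of_iteratedDeriv_eq_inv ha.ne' hb.ne' hab.ne
    (by omega : Q.natDegree ≤ m₂ + m₁ + 1) hQa hQb
  rintro x ⟨hax, hxb⟩
  have hx : x ≠ 0 := (ha.trans hax).ne'
  have herr : ∀ p : ℝ, x⁻¹ - p = (1 - x * p) / x := fun p => by field_simp
  obtain ⟨k, rfl⟩ := Nat.exists_eq_add_of_le hm.le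
  have hu : 1 - x / a < 0 := by rw [sub_neg, one_lt_div ha]; exact hax
  have hv : 0 < 1 - x / b := by rw [sub_pos, div_lt_one hb]; exact hxb
  rw [herr, herr, hP, hQ, Nat.add_sub_cancel_left, mul_div_assoc', div_left_inj' hx,
    show m₂ + k + 1 = m₂ + 1 + k by ring, pow_add_mul_pow_eq_neg_one_pow_mul_iff hu hv _ (by omega),
    eq_div_iff (by positivity)]
  field_simp
  constructor <;> intro h <;> linarith
end

section
/- For real numbers b with 0 < b ≠ 1 and the unique solution x of the equation (x-a)^{m₁-m₂} b^{m₁-m₂} = (x-b)^{m₁-m₂} a^{m₁-m₂} with a < x < b, 0 < a < b, and m₁ - m₂ a positive integer: x = 2ab/(a+b). -/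
/-!
Both sides of the equation are `n`-th powers, `((x - a) b)^n = ((x - b) a)^n` with `n = m₁ - m₂ ≥ 1`.
For `a < x < b` the two bases have opposite signs, so they can only agree up to sign:
`(x - a) b = (b - x) a`, which is linear in `x` and solved by the harmonic mean `2ab / (a + b)`.
-/

theorem eq_neg_of_pow_eq_pow_of_pos_of_neg {R : Type*} [Ring R] [LinearOrder R]
    [IsStrictOrderedRing R] {u v : R} {n : ℕ} (hn : n ≠ 0) (hu : 0 < u) (hv : v < 0)
    (h : u ^ n = v ^ n) : u = -v := by
  rcases (pow_eq_pow_iff_of_ne_zero hn).mp h with huv | ⟨huv, -⟩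
  · exact absurd (huv ▸ hu) hv.not_gt
  · exact huv

theorem eq_harmonic_mean_of_mul_sub_eq {a b x : ℝ} (hab : a + b ≠ 0)
    (h : (x - a) * b = (b - x) * a) : x = 2 * a * b / (a + b) := by
  rw [eq_div_iff hab]
  linarith

theorem stmt8 (m₁ m₂ : ℕ) (hm : m₂ < m₁) (a b : ℝ) (ha : 0 < a) (hab : a < b)
    (x : ℝ) (hx : x ∈ Set.Ioo a b)
    (heq : (x - a) ^ (m₁ - m₂) * b ^ (m₁ - m₂) = (x - b) ^ (m₁ - m₂) * a ^ (m₁ - m₂)) :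
    x = 2 * a * b / (a + b) := by
  obtain ⟨hax, hxb⟩ := hx
  have hb : 0 < b := ha.trans hab
  have hpow : ((x - a) * b) ^ (m₁ - m₂) = ((x - b) * a) ^ (m₁ - m₂) := by
    rwa [mul_pow, mul_pow]
  have hlin : (x - a) * b = -((x - b) * a) :=
    eq_neg_of_pow_eq_pow_of_pos_of_neg (Nat.sub_ne_zero_of_lt hm)
      (mul_pos (sub_pos.mpr hax) hb) (mul_neg_of_neg_of_pos (sub_neg.mpr hxb) ha) hpow
  exact eq_harmonic_mean_of_mul_sub_eq (by positivity) (by linarith)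
end

section
/- Let m₂ < m₁ be nonnegative integers with m₁ + m₂ even, p = (m₁+m₂+1)/2, and b > 0, b ≠ 1. Then b^{m₂} · f[1, (1/b)^{m₁+1}, b^{m₂+1}] = b^{m₁} · f[1, (1/b)^{m₂+1}, b^{m₁+1}], where f(x) = x^p and the brackets denote confluent divided differences of order m₁+m₂+2 with the node 1/b repeated m₁+1 (resp. m₂+1) times and b repeated m₂+1 (resp. m₁+1) times. -/
open Polynomial Set

/-- `IsDD f x y z r s D` says that `D` is the value of the confluent divided difference
`f[x, y^r, z^s]` (node `y` repeated `r` times, node `z` repeated `s` times), characterized as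
the leading coefficient of the Hermite interpolant of degree at most `r + s` matching `f` at
`x` and matching `f` and its derivatives up to order `r - 1` at `y` and `s - 1` at `z`. -/
def IsDD (f : ℝ → ℝ) (x y z : ℝ) (r s : ℕ) (D : ℝ) : Prop :=
  ∃ H : Polynomial ℝ, H.natDegree ≤ r + s ∧ H.coeff (r + s) = D ∧
    H.eval x = f x ∧
    (∀ j < r, iteratedDeriv j (fun t => H.eval t) y = iteratedDeriv j f y) ∧
    (∀ j < s, iteratedDeriv j (fun t => H.eval t) z = iteratedDeriv j f z)

private lemma iteratedDerivWithin_isOpen'' {n : ℕ} {f : ℝ → ℝ} {s : Set ℝ} {x : ℝ}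
    (hs : IsOpen s) (hx : x ∈ s) :
    iteratedDerivWithin n f s x = iteratedDeriv n f x := by
  simp only [iteratedDerivWithin, iteratedDeriv, iteratedFDerivWithin_of_isOpen n hs hx]

private lemma contDiff_polyeval (p : ℝ[X]) : ContDiff ℝ (⊤ : ℕ∞) fun x : ℝ => p.eval x := by
  induction p using Polynomial.induction_on with
  | C a => simpa using contDiff_const (c := a)
  | add p q hp hq => simpa only [eval_add] using hp.add hq
  | monomial n a _ =>
      simpa only [eval_mul, eval_C, eval_pow, eval_X, id_eq] using
        (contDiff_const (c := a)).mul (contDiff_id.pow (n + 1))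

private lemma poly_iteratedDeriv (j : ℕ) : ∀ (K : ℝ[X]),
    iteratedDeriv j (fun t => K.eval t) = fun x => (derivative^[j] K).eval x := by
  induction j with
  | zero => intro K; simp [iteratedDeriv_zero]
  | succ j IH =>
    intro K
    rw [iteratedDeriv_succ']
    have : _root_.deriv (fun t : ℝ => K.eval t) = fun t : ℝ => (derivative K).eval t := by
      funext t; exact (Polynomial.hasDerivAt K t).deriv
    rw [this, IH (derivative K)]
    funext x
    rw [Function.iterate_succ_apply]

private lemma jet_vanish {U : Set ℝ} (hU : IsOpen U) (φ : ℝ → ℝ)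
    (hφ : ContDiffOn ℝ (⊤ : ℕ∞) φ U) (hmaps : Set.MapsTo φ U U) :
    ∀ (n : ℕ) (u w : ℝ → ℝ), ContDiffOn ℝ (⊤ : ℕ∞) u U → ContDiffOn ℝ (⊤ : ℕ∞) w U →
      ∀ c ∈ U, (∀ j ≤ n, iteratedDeriv j u (φ c) = 0) →
      ∀ j ≤ n, iteratedDeriv j (fun x => w x * u (φ x)) c = 0 := by
  intro n
  induction n with
  | zero =>
    intro u w hu hw c hc hvan j hj
    have hj0 : j = 0 := Nat.le_zero.mp hj
    subst hj0
    have h0 := hvan 0 le_rfl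
    simp only [iteratedDeriv_zero] at h0 ⊢
    rw [h0, mul_zero]
  | succ n IH =>
    intro u w hu hw c hc hvan j hj
    match j with
    | 0 =>
      have h0 := hvan 0 (Nat.zero_le _)
      simp only [iteratedDeriv_zero] at h0 ⊢
      rw [h0, mul_zero]
    | (k+1) =>
      have hk : k ≤ n := Nat.succ_le_succ_iff.mp hj
      rw [iteratedDeriv_succ']
      have hderiv : deriv (fun x => w x * u (φ x)) =ᶠ[nhds c]
          fun x => deriv w x * u (φ x) + (w x * deriv φ x) * deriv u (φ x) := by
        filter_upwards [hU.mem_nhds hc] with x hx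
        have hw' : HasDerivAt w (deriv w x) x :=
          ((hw.contDiffAt (hU.mem_nhds hx)).differentiableAt (by simp)).hasDerivAt
        have hφ' : HasDerivAt φ (deriv φ x) x :=
          ((hφ.contDiffAt (hU.mem_nhds hx)).differentiableAt (by simp)).hasDerivAt
        have hu' : HasDerivAt u (deriv u (φ x)) (φ x) :=
          ((hu.contDiffAt (hU.mem_nhds (hmaps hx))).differentiableAt (by simp)).hasDerivAt
        have hcomp : HasDerivAt (fun y => u (φ y)) (deriv u (φ x) * deriv φ x) x :=
          HasDerivAt.comp x hu' hφ'
        have : deriv (fun y => w y * u (φ y)) x =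
            deriv w x * u (φ x) + w x * (deriv u (φ x) * deriv φ x) := (hw'.mul hcomp).deriv
        rw [this]; ring
      rw [hderiv.iteratedDeriv_eq k]
      have hwd : ContDiffOn ℝ (⊤ : ℕ∞) (deriv w) U := hw.deriv_of_isOpen hU (mod_cast le_top)
      have hφd : ContDiffOn ℝ (⊤ : ℕ∞) (deriv φ) U := hφ.deriv_of_isOpen hU (mod_cast le_top)
      have hud : ContDiffOn ℝ (⊤ : ℕ∞) (deriv u) U := hu.deriv_of_isOpen hU (mod_cast le_top)
      have h1 : ContDiffOn ℝ (k : ℕ∞) (fun x => deriv w x * u (φ x)) U :=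
        (hwd.mul (hu.comp hφ hmaps)).of_le (mod_cast le_top)
      have h2 : ContDiffOn ℝ (k : ℕ∞) (fun x => (w x * deriv φ x) * deriv u (φ x)) U :=
        ((hw.mul hφd).mul (hud.comp hφ hmaps)).of_le (mod_cast le_top)
      have hsplit : iteratedDeriv k
          (fun x => deriv w x * u (φ x) + (w x * deriv φ x) * deriv u (φ x)) c =
          iteratedDeriv k (fun x => deriv w x * u (φ x)) c +
          iteratedDeriv k (fun x => (w x * deriv φ x) * deriv u (φ x)) c := by
        rw [← iteratedDerivWithin_isOpen'' hU hc, ← iteratedDerivWithin_isOpen'' hU hc,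
          ← iteratedDerivWithin_isOpen'' hU hc]
        exact iteratedDerivWithin_add hc hU.uniqueDiffOn (h1 c hc) (h2 c hc)
      rw [hsplit]
      have e1 : iteratedDeriv k (fun x => deriv w x * u (φ x)) c = 0 :=
        IH u (deriv w) hu hwd c hc (fun i hi => hvan i (hi.trans (Nat.le_succ n))) k hk
      have e2 : iteratedDeriv k (fun x => (w x * deriv φ x) * deriv u (φ x)) c = 0 := by
        refine IH (deriv u) (fun x => w x * deriv φ x) hud (hw.mul hφd) c hc ?_ k hk
        intro i hi
        rw [← iteratedDeriv_succ']
        exact hvan (i + 1) (Nat.succ_le_succ hi)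
      rw [e1, e2, add_zero]

private lemma iteratedDeriv_sub_open {n : ℕ} {g h : ℝ → ℝ} {s : Set ℝ} {x : ℝ}
    (hs : IsOpen s) (hx : x ∈ s)
    (hg : ContDiffOn ℝ (⊤ : ℕ∞) g s) (hh : ContDiffOn ℝ (⊤ : ℕ∞) h s) :
    iteratedDeriv n (fun t => g t - h t) x = iteratedDeriv n g x - iteratedDeriv n h x := by
  rw [← iteratedDerivWithin_isOpen'' hs hx, ← iteratedDerivWithin_isOpen'' hs hx,
    ← iteratedDerivWithin_isOpen'' hs hx]
  exact iteratedDerivWithin_sub hx hs.uniqueDiffOn (hg.of_le (mod_cast le_top) x hx) (hh.of_le (mod_cast le_top) x hx)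

private lemma pow_dvd_of_jets {K : ℝ[X]} {a : ℝ} {k : ℕ} (hK : K ≠ 0)
    (hjets : ∀ j ≤ k, (derivative^[j] K).eval a = 0) :
    (X - C a) ^ (k + 1) ∣ K := by
  have hlt : k < rootMultiplicity a K := by
    apply Polynomial.lt_rootMultiplicity_of_isRoot_iterate_derivative_of_mem_nonZeroDivisors hK
      (fun m hm => hjets m hm)
    exact mem_nonZeroDivisors_of_ne_zero
      (Nat.cast_ne_zero.mpr (Nat.factorial_ne_zero _))
  exact (pow_dvd_pow _ hlt).trans (Polynomial.pow_rootMultiplicity_dvd K a)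

theorem stmt9 (m₁ m₂ : ℕ) (hm : m₂ < m₁) (heven : Even (m₁ + m₂))
    (b : ℝ) (hb : 0 < b) (hb1 : b ≠ 1) (D₁ D₂ : ℝ)
    (h₁ : IsDD (fun x => x ^ ((m₁ + m₂ + 1 : ℝ) / 2)) 1 (1 / b) b (m₁ + 1) (m₂ + 1) D₁)
    (h₂ : IsDD (fun x => x ^ ((m₁ + m₂ + 1 : ℝ) / 2)) 1 (1 / b) b (m₂ + 1) (m₁ + 1) D₂) :
    b ^ m₂ * D₁ = b ^ m₁ * D₂ := by
  obtain ⟨H₁, hd₁, hc₁, he₁, hy₁, hz₁⟩ := h₁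
  obtain ⟨H₂, hd₂, hc₂, he₂, hy₂, hz₂⟩ := h₂
  rw [one_div] at hy₁ hy₂
  set f : ℝ → ℝ := fun x => x ^ ((m₁ + m₂ + 1 : ℝ) / 2) with hf
  set N : ℕ := m₁ + m₂ + 2 with hN
  have hb0 : b ≠ 0 := ne_of_gt hb
  have hbinv : (0:ℝ) < b⁻¹ := inv_pos.mpr hb
  have hNd₁ : H₁.natDegree ≤ N := by
    refine hd₁.trans ?_; omega
  have hNd₂ : H₂.natDegree ≤ N := by
    refine hd₂.trans ?_; omega
  have hNc₁ : H₁.coeff N = D₁ := by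
    have : m₁ + 1 + (m₂ + 1) = N := by omega
    rwa [this] at hc₁
  have hNc₂ : H₂.coeff N = D₂ := by
    have : m₂ + 1 + (m₁ + 1) = N := by omega
    rwa [this] at hc₂
  -- smoothness setup
  have hU : IsOpen (Ioi (0:ℝ)) := isOpen_Ioi
  have hfU : ContDiffOn ℝ (⊤ : ℕ∞) f (Ioi 0) := fun x hx =>
    (Real.contDiffAt_rpow_const_of_ne (ne_of_gt (mem_Ioi.mp hx))).contDiffWithinAt
  have hinvU : ContDiffOn ℝ (⊤ : ℕ∞) (fun x : ℝ => x⁻¹) (Ioi 0) := fun x hx =>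
    (contDiffAt_inv ℝ (ne_of_gt (mem_Ioi.mp hx))).contDiffWithinAt
  have hmaps : Set.MapsTo (fun x : ℝ => x⁻¹) (Ioi 0) (Ioi 0) := fun x hx =>
    mem_Ioi.mpr (inv_pos.mpr (mem_Ioi.mp hx))
  have hidU : ContDiffOn ℝ (⊤ : ℕ∞) (fun x : ℝ => x) (Ioi 0) := contDiff_id.contDiffOn
  have hidmaps : Set.MapsTo (fun x : ℝ => x) (Ioi 0) (Ioi 0) := fun x hx => hx
  have hH₁U : ContDiffOn ℝ (⊤ : ℕ∞) (fun x : ℝ => H₁.eval x) (Ioi 0) :=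
    (contDiff_polyeval H₁).contDiffOn
  have hH₂U : ContDiffOn ℝ (⊤ : ℕ∞) (fun x : ℝ => H₂.eval x) (Ioi 0) :=
    (contDiff_polyeval H₂).contDiffOn
  have hu₁U : ContDiffOn ℝ (⊤ : ℕ∞) (fun x : ℝ => f x - H₁.eval x) (Ioi 0) := hfU.sub hH₁U
  have hu₂U : ContDiffOn ℝ (⊤ : ℕ∞) (fun x : ℝ => H₂.eval x - f x) (Ioi 0) := hH₂U.sub hfU
  -- key rpow identity
  have key : ∀ x : ℝ, 0 < x → x ^ N * f x⁻¹ = x * f x := by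
    intro x hx
    rw [hf]
    show x ^ N * (x⁻¹) ^ ((m₁ + m₂ + 1 : ℝ) / 2) = x * x ^ ((m₁ + m₂ + 1 : ℝ) / 2)
    rw [Real.inv_rpow hx.le, ← Real.rpow_natCast x N, ← Real.rpow_neg hx.le, ← Real.rpow_add hx]
    have hrhs : x * x ^ ((m₁ + m₂ + 1 : ℝ) / 2) = x ^ (1 + (m₁ + m₂ + 1 : ℝ) / 2) := by
      rw [Real.rpow_add hx, Real.rpow_one]
    rw [hrhs]
    congr 1
    rw [hN]
    push_cast
    ring
  -- reflect eval identity
  have hrefl : ∀ x : ℝ, x ≠ 0 → (reflect N H₁).eval x = x ^ N * H₁.eval x⁻¹ := by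
    intro x hx
    have hxinv : (x⁻¹ : ℝ) ≠ 0 := inv_ne_zero hx
    letI : Invertible (x⁻¹ : ℝ) := invertibleOfNonzero hxinv
    have h := Polynomial.eval₂_reflect_mul_pow (RingHom.id ℝ) x⁻¹ N H₁ hNd₁
    rw [invOf_eq_inv, inv_inv] at h
    have e1 : ∀ (q : ℝ[X]) (y : ℝ), eval₂ (RingHom.id ℝ) y q = q.eval y := fun q y => rfl
    rw [e1, e1] at h
    have hxN : (x⁻¹ : ℝ) ^ N = (x ^ N)⁻¹ := by rw [inv_pow]
    rw [hxN] at h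
    rw [← h]
    have hxN0 : (x:ℝ) ^ N ≠ 0 := pow_ne_zero _ hx
    field_simp
  -- the polynomial K
  set K : ℝ[X] := X * H₂ - reflect N H₁ with hK
  have hrdeg : (reflect N H₁).natDegree ≤ N := by
    rw [natDegree_le_iff_coeff_eq_zero]
    intro i hi
    rw [coeff_reflect, revAt_eq_self_of_lt hi]
    exact coeff_eq_zero_of_natDegree_lt (lt_of_le_of_lt hNd₁ hi)
  have hKdeg : K.natDegree ≤ N + 1 := by
    refine (natDegree_sub_le _ _).trans (max_le ?_ (hrdeg.trans (Nat.le_succ N)))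
    refine natDegree_mul_le.trans ?_
    simp only [natDegree_X]
    omega
  have hKcoeff : K.coeff (N + 1) = D₂ := by
    rw [hK, coeff_sub, coeff_X_mul, hNc₂, coeff_reflect,
      revAt_eq_self_of_lt (Nat.lt_succ_self N),
      coeff_eq_zero_of_natDegree_lt (lt_of_le_of_lt hNd₁ (Nat.lt_succ_self N)), sub_zero]
  have hK0 : K.eval 0 = -D₁ := by
    rw [hK, eval_sub, eval_mul, eval_X, zero_mul, zero_sub, ← coeff_zero_eq_eval_zero,
      coeff_reflect, revAt_le (Nat.zero_le N), Nat.sub_zero, hNc₁]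
  -- K.eval agrees with T1 + T2 on Ioi 0
  set T1 : ℝ → ℝ := fun x => x * (H₂.eval x - f x) with hT1
  set T2 : ℝ → ℝ := fun x => x ^ N * (f x⁻¹ - H₁.eval x⁻¹) with hT2
  have hKT : ∀ x ∈ Ioi (0:ℝ), K.eval x = T1 x + T2 x := by
    intro x hx
    have hx0 : (0:ℝ) < x := mem_Ioi.mp hx
    rw [hK, eval_sub, eval_mul, eval_X, hrefl x (ne_of_gt hx0), hT1, hT2]
    have := key x hx0
    simp only
    nlinarith [this]
  have hT1U : ContDiffOn ℝ (⊤ : ℕ∞) T1 (Ioi 0) := hidU.mul hu₂U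
  have hT2U : ContDiffOn ℝ (⊤ : ℕ∞) T2 (Ioi 0) :=
    (contDiff_id.pow N).contDiffOn.mul (hu₁U.comp hinvU hmaps)
  -- jets of u₂ = H₂.eval - f
  have hu₂jet : ∀ (a : ℝ), a ∈ Ioi (0:ℝ) → ∀ (n : ℕ),
      (∀ j < n + 1, iteratedDeriv j (fun t => H₂.eval t) a = iteratedDeriv j f a) →
      ∀ j ≤ n, iteratedDeriv j (fun x => H₂.eval x - f x) a = 0 := by
    intro a ha n hmatch j hj
    rw [iteratedDeriv_sub_open hU ha hH₂U hfU, hmatch j (Nat.lt_succ_of_le hj), sub_self]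
  have hu₁jet : ∀ (a : ℝ), a ∈ Ioi (0:ℝ) → ∀ (n : ℕ),
      (∀ j < n + 1, iteratedDeriv j (fun t => H₁.eval t) a = iteratedDeriv j f a) →
      ∀ j ≤ n, iteratedDeriv j (fun x => f x - H₁.eval x) a = 0 := by
    intro a ha n hmatch j hj
    rw [iteratedDeriv_sub_open hU ha hfU hH₁U, hmatch j (Nat.lt_succ_of_le hj), sub_self]
  -- main jet vanishing for K
  have hKjet : ∀ (a : ℝ), a ∈ Ioi (0:ℝ) → ∀ (n : ℕ),
      (∀ j ≤ n, iteratedDeriv j (fun x => H₂.eval x - f x) a = 0) →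
      (∀ j ≤ n, iteratedDeriv j (fun x => f x - H₁.eval x) a⁻¹ = 0) →
      ∀ j ≤ n, (derivative^[j] K).eval a = 0 := by
    intro a ha n hj2 hj1 j hj
    have hre : (fun t => K.eval t) =ᶠ[nhds a] fun x => T1 x + T2 x := by
      filter_upwards [hU.mem_nhds ha] with x hx
      exact hKT x hx
    have h0 : iteratedDeriv j (fun t => K.eval t) a = 0 := by
      rw [hre.iteratedDeriv_eq j]
      have hsplit : iteratedDeriv j (fun x => T1 x + T2 x) a =
          iteratedDeriv j T1 a + iteratedDeriv j T2 a := by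
        rw [← iteratedDerivWithin_isOpen'' hU ha, ← iteratedDerivWithin_isOpen'' hU ha,
          ← iteratedDerivWithin_isOpen'' hU ha]
        exact iteratedDerivWithin_add ha hU.uniqueDiffOn
          (hT1U.of_le (mod_cast le_top) a ha) (hT2U.of_le (mod_cast le_top) a ha)
      rw [hsplit]
      have e1 : iteratedDeriv j T1 a = 0 := by
        refine jet_vanish hU (fun x : ℝ => x) hidU hidmaps n
          (fun x => H₂.eval x - f x) (fun x : ℝ => x) hu₂U hidU a ha ?_ j hj
        intro i hi
        exact hj2 i hi
      have e2 : iteratedDeriv j T2 a = 0 := by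
        refine jet_vanish hU (fun x : ℝ => x⁻¹) hinvU hmaps n
          (fun x => f x - H₁.eval x) (fun x : ℝ => x ^ N) hu₁U
          (contDiff_id.pow N).contDiffOn a ha ?_ j hj
        intro i hi
        exact hj1 i hi
      rw [e1, e2, add_zero]
    rw [poly_iteratedDeriv j K] at h0
    exact h0
  -- jets at the three nodes
  have hmem1 : (1:ℝ) ∈ Ioi (0:ℝ) := mem_Ioi.mpr one_pos
  have hmemb : b ∈ Ioi (0:ℝ) := mem_Ioi.mpr hb
  have hmembi : b⁻¹ ∈ Ioi (0:ℝ) := mem_Ioi.mpr hbinv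
  have hjets1 : ∀ j ≤ 0, (derivative^[j] K).eval 1 = 0 := by
    refine hKjet 1 hmem1 0 ?_ ?_
    · intro j hj
      have hj0 : j = 0 := Nat.le_zero.mp hj
      subst hj0
      simp only [iteratedDeriv_zero]
      rw [he₂, sub_self]
    · intro j hj
      have hj0 : j = 0 := Nat.le_zero.mp hj
      subst hj0
      simp only [iteratedDeriv_zero, inv_one]
      rw [he₁, sub_self]
  have hjetsbi : ∀ j ≤ m₂, (derivative^[j] K).eval b⁻¹ = 0 := by
    refine hKjet b⁻¹ hmembi m₂ (hu₂jet b⁻¹ hmembi m₂ hy₂) ?_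
    rw [inv_inv]
    exact hu₁jet b hmemb m₂ hz₁
  have hjetsb : ∀ j ≤ m₁, (derivative^[j] K).eval b = 0 := by
    exact hKjet b hmemb m₁ (hu₂jet b hmemb m₁ hz₂) (hu₁jet b⁻¹ hmembi m₁ hy₁)
  -- distinctness
  have hne1bi : (1:ℝ) ≠ b⁻¹ := by
    intro h; apply hb1; rw [← inv_inv b, ← h, inv_one]
  have hne1b : (1:ℝ) ≠ b := fun h => hb1 h.symm
  have hnebib : (b⁻¹ : ℝ) ≠ b := by
    intro h
    have hb2 : b ^ 2 = 1 := by
      field_simp at h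
      nlinarith [h]
    have : b = 1 := by nlinarith [hb2, hb]
    exact hb1 this
  -- case K = 0
  by_cases hKz : K = 0
  · have hD₂ : D₂ = 0 := by rw [← hKcoeff, hKz, coeff_zero]
    have hD₁ : D₁ = 0 := by
      have := hK0; rw [hKz, eval_zero] at this; linarith
    rw [hD₁, hD₂, mul_zero, mul_zero]
  · -- divisibility
    have hdvd1 : (X - C (1:ℝ)) ^ (0 + 1) ∣ K := pow_dvd_of_jets hKz hjets1
    have hdvdbi : (X - C (b⁻¹:ℝ)) ^ (m₂ + 1) ∣ K := pow_dvd_of_jets hKz hjetsbi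
    have hdvdb : (X - C b) ^ (m₁ + 1) ∣ K := pow_dvd_of_jets hKz hjetsb
    rw [zero_add, pow_one] at hdvd1
    have hcop1bi : IsCoprime (X - C (1:ℝ)) (X - C (b⁻¹:ℝ)) :=
      isCoprime_X_sub_C_of_isUnit_sub (sub_ne_zero.mpr hne1bi).isUnit
    have hcop1b : IsCoprime (X - C (1:ℝ)) (X - C b) :=
      isCoprime_X_sub_C_of_isUnit_sub (sub_ne_zero.mpr hne1b).isUnit
    have hcopbib : IsCoprime (X - C (b⁻¹:ℝ)) (X - C b) :=
      isCoprime_X_sub_C_of_isUnit_sub (sub_ne_zero.mpr hnebib).isUnit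
    set PP : ℝ[X] := (X - C (1:ℝ)) * ((X - C (b⁻¹:ℝ)) ^ (m₂ + 1) * (X - C b) ^ (m₁ + 1))
      with hPP
    have hdvd : PP ∣ K := by
      refine IsCoprime.mul_dvd ?_ hdvd1 (IsCoprime.mul_dvd ?_ hdvdbi hdvdb)
      · have h1 : IsCoprime (X - C (1:ℝ)) ((X - C (b⁻¹:ℝ)) ^ (m₂ + 1)) := by
          simpa using (hcop1bi.pow (m := 1) (n := m₂ + 1))
        have h2 : IsCoprime (X - C (1:ℝ)) ((X - C b) ^ (m₁ + 1)) := by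
          simpa using (hcop1b.pow (m := 1) (n := m₁ + 1))
        exact h1.mul_right h2
      · exact hcopbib.pow
    have hPPmonic : PP.Monic :=
      (monic_X_sub_C 1).mul (((monic_X_sub_C b⁻¹).pow (m₂+1)).mul ((monic_X_sub_C b).pow (m₁+1)))
    have hPPdeg : PP.natDegree = N + 1 := by
      rw [hPP]
      rw [(monic_X_sub_C (1:ℝ)).natDegree_mul
        (((monic_X_sub_C b⁻¹).pow (m₂+1)).mul ((monic_X_sub_C b).pow (m₁+1)))]
      rw [((monic_X_sub_C (b⁻¹:ℝ)).pow (m₂+1)).natDegree_mul ((monic_X_sub_C b).pow (m₁+1))]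
      rw [natDegree_pow, natDegree_pow, natDegree_X_sub_C, natDegree_X_sub_C,
        natDegree_X_sub_C]
      omega
    obtain ⟨q, hq⟩ := hdvd
    have hq0 : q ≠ 0 := by
      intro h; apply hKz; rw [hq, h, mul_zero]
    have hqdeg : q.natDegree = 0 := by
      have := hKdeg
      rw [hq, natDegree_mul (hPPmonic.ne_zero) hq0, hPPdeg] at this
      omega
    obtain ⟨c, hc⟩ : ∃ c : ℝ, q = C c := ⟨q.coeff 0, eq_C_of_natDegree_eq_zero hqdeg⟩
    have hcD₂ : c = D₂ := by
      rw [← hKcoeff, hq, hc, coeff_mul_C, ← hPPdeg, hPPmonic.coeff_natDegree, one_mul]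
    -- evaluate at 0
    have hPP0 : PP.eval 0 = -((b⁻¹) ^ (m₂ + 1) * b ^ (m₁ + 1)) := by
      rw [hPP]
      simp only [eval_mul, eval_pow, eval_sub, eval_X, eval_C, zero_sub]
      rw [neg_pow, neg_pow]
      have hpar : (-1 : ℝ) ^ (m₂ + 1) * (-1 : ℝ) ^ (m₁ + 1) = 1 := by
        rw [← pow_add]
        have : Even (m₂ + 1 + (m₁ + 1)) := by
          obtain ⟨k, hk⟩ := heven
          exact ⟨k + 1, by omega⟩
        exact this.neg_one_pow
      linear_combination (-(b⁻¹ ^ (m₂ + 1) * b ^ (m₁ + 1))) * hpar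
    have hfinal : -D₁ = -((b⁻¹) ^ (m₂ + 1) * b ^ (m₁ + 1)) * D₂ := by
      rw [← hK0, hq, hc, hcD₂, eval_mul, eval_C, hPP0]
    have hD₁ : D₁ = (b⁻¹) ^ (m₂ + 1) * b ^ (m₁ + 1) * D₂ := by linarith
    rw [hD₁]
    rw [inv_pow]
    field_simp
    ring
end

section
/- Let 0 < a < b and let f be four times differentiable at a and b. Define M_{f,2,0}(a,b) = [(b-a)(b f''(b) + a f''(a)) + 2(a-2b) f'(b) + 2(2a-b) f'(a) + 6(f(b)-f(a))] / [(b-a)(f''(b) + f''(a)) - 2(f'(b) - f'(a))], assuming the denominator is nonzero. If P and Q are the unique polynomials of degree ≤ 3 with P(a) = f(a), P'(a) = f'(a), P''(a) = f''(a), P(b) = f(b), and Q(a) = f(a), Q(b) = f(b), Q'(b) = f'(b), Q''(b) = f''(b), then P(x) - Q(x) = (x-a)(x-b)(cx+d) where c = -[(b-a)(f''(b)+f''(a)) - 2(f'(b)-f'(a))]/(2(b-a)²) and -d/c = M_{f,2,0}(a,b). -/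
open Polynomial

/-!
`P` is the second-order Taylor polynomial of `f` at `a` plus a multiple of `(x - a)³` fixed by
`P(b) = f(b)`, and symmetrically for `Q` at `b`. Hence `P - Q` is an explicit cubic vanishing at
`a` and `b`; expanding it gives the factor `c x + d` with `d = N / (2 (b - a)²)`, where `N / D` is
`M_{f,2,0}(a,b)` as written, and then `-d / c = N / D` because `c = -D / (2 (b - a)²)`.
-/

lemma Polynomial.eval_eq_taylor_two_add_of_natDegree_le_three {K : Type*} [Field K] [CharZero K]
    {p : K[X]} (hp : p.natDegree ≤ 3) {a b : K} (hab : a ≠ b) (x : K) :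
    p.eval x = p.eval a + (derivative p).eval a * (x - a)
      + (derivative (derivative p)).eval a / 2 * (x - a) ^ 2
      + (p.eval b - p.eval a - (derivative p).eval a * (b - a)
          - (derivative (derivative p)).eval a / 2 * (b - a) ^ 2) / (b - a) ^ 3 * (x - a) ^ 3 := by
  have hba : b - a ≠ 0 := sub_ne_zero.mpr hab.symm
  have hp' : (derivative p).natDegree ≤ 2 := (natDegree_derivative_le p).trans (by omega)
  have hp'' : (derivative (derivative p)).natDegree ≤ 1 :=
    (natDegree_derivative_le _).trans (by omega)
  simp only [eval_eq_sum_range' (Nat.lt_succ_of_le hp), eval_eq_sum_range' (Nat.lt_succ_of_le hp'),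
    eval_eq_sum_range' (Nat.lt_succ_of_le hp''), Finset.sum_range_succ, Finset.sum_range_zero,
    coeff_derivative]
  field_simp
  push_cast
  ring

theorem stmt17_general (a b : ℝ) (hab : a < b) (f : ℝ → ℝ)
    (P Q : Polynomial ℝ) (hPdeg : P.natDegree ≤ 3) (hQdeg : Q.natDegree ≤ 3)
    (hPa0 : P.eval a = f a)
    (hPa1 : deriv (fun t => P.eval t) a = deriv f a)
    (hPa2 : deriv (deriv (fun t => P.eval t)) a = deriv (deriv f) a)
    (hPb0 : P.eval b = f b)
    (hQa0 : Q.eval a = f a)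
    (hQb0 : Q.eval b = f b)
    (hQb1 : deriv (fun t => Q.eval t) b = deriv f b)
    (hQb2 : deriv (deriv (fun t => Q.eval t)) b = deriv (deriv f) b)
    (c : ℝ)
    (hc : c = -((b - a) * (deriv (deriv f) b + deriv (deriv f) a)
        - 2 * (deriv f b - deriv f a)) / (2 * (b - a) ^ 2)) :
    ∃ d : ℝ, (∀ x : ℝ, P.eval x - Q.eval x = (x - a) * (x - b) * (c * x + d)) ∧
      -d / c = ((b - a) * (b * deriv (deriv f) b + a * deriv (deriv f) a)
          + 2 * (a - 2 * b) * deriv f b + 2 * (2 * a - b) * deriv f a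
          + 6 * (f b - f a)) /
        ((b - a) * (deriv (deriv f) b + deriv (deriv f) a)
          - 2 * (deriv f b - deriv f a)) := by
  have hba : b - a ≠ 0 := sub_ne_zero.mpr hab.ne'
  have hab' : a - b ≠ 0 := sub_ne_zero.mpr hab.ne
  have hderiv (p : ℝ[X]) : deriv (fun t => p.eval t) = fun t => (derivative p).eval t :=
    funext fun _ => p.deriv
  simp only [hderiv] at hPa1 hPa2 hQb1 hQb2
  subst hc
  have hP := eval_eq_taylor_two_add_of_natDegree_le_three hPdeg hab.ne
  have hQ := eval_eq_taylor_two_add_of_natDegree_le_three hQdeg hab.ne'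
  rw [hPa0, hPa1, hPa2, hPb0] at hP
  rw [hQb0, hQb1, hQb2, hQa0] at hQ
  refine ⟨((b - a) * (b * deriv (deriv f) b + a * deriv (deriv f) a)
      + 2 * (a - 2 * b) * deriv f b + 2 * (2 * a - b) * deriv f a
      + 6 * (f b - f a)) / (2 * (b - a) ^ 2), fun x => ?_, ?_⟩
  · rw [hP, hQ]
    field_simp
    ring
  · rw [← neg_div, div_div_div_cancel_right₀ (by positivity), neg_div_neg_eq]

theorem stmt17 (a b : ℝ) (ha : 0 < a) (hab : a < b) (f : ℝ → ℝ)
    (hfa : ContDiffAt ℝ 4 f a) (hfb : ContDiffAt ℝ 4 f b)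
    (hden : (b - a) * (deriv (deriv f) b + deriv (deriv f) a)
        - 2 * (deriv f b - deriv f a) ≠ 0)
    (P Q : Polynomial ℝ) (hPdeg : P.natDegree ≤ 3) (hQdeg : Q.natDegree ≤ 3)
    (hPa0 : P.eval a = f a)
    (hPa1 : deriv (fun t => P.eval t) a = deriv f a)
    (hPa2 : deriv (deriv (fun t => P.eval t)) a = deriv (deriv f) a)
    (hPb0 : P.eval b = f b)
    (hQa0 : Q.eval a = f a)
    (hQb0 : Q.eval b = f b)
    (hQb1 : deriv (fun t => Q.eval t) b = deriv f b)
    (hQb2 : deriv (deriv (fun t => Q.eval t)) b = deriv (deriv f) b)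
    (c : ℝ)
    (hc : c = -((b - a) * (deriv (deriv f) b + deriv (deriv f) a)
        - 2 * (deriv f b - deriv f a)) / (2 * (b - a) ^ 2)) :
    ∃ d : ℝ, (∀ x : ℝ, P.eval x - Q.eval x = (x - a) * (x - b) * (c * x + d)) ∧
      -d / c = ((b - a) * (b * deriv (deriv f) b + a * deriv (deriv f) a)
          + 2 * (a - 2 * b) * deriv f b + 2 * (2 * a - b) * deriv f a
          + 6 * (f b - f a)) /
        ((b - a) * (deriv (deriv f) b + deriv (deriv f) a)
          - 2 * (deriv f b - deriv f a)) :=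
  stmt17_general a b hab f P Q hPdeg hQdeg hPa0 hPa1 hPa2 hPb0 hQa0 hQb0 hQb1 hQb2 c hc
end

section
/- For all nonnegative integers m₁, m₂ and all real x with |x| < 1, (1/binom(m₁+m₂, m₂)) · ∑_{k=0}^{m₁} binom(m₂+m₁-k, m₂) · binom((m₂+m₁)/2, k) · x^k = ₂F₁(-(m₁+m₂)/2, -m₁; -m₁-m₂; -x), interpreting the hypergeometric series as the (terminating) finite sum since -m₁ is a nonpositive integer. -/
/-- Pochhammer symbol `(x)_k = x(x+1)⋯(x+k-1)`. -/
noncomputable def poch (x : ℝ) (k : ℕ) : ℝ := ∏ i ∈ Finset.range k, (x + i)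

open Finset Polynomial

theorem Nat.choose_add_sub_mul_descFactorial {n m k : ℕ} (hk : k ≤ m) :
    (n + m - k).choose n * (n + m).descFactorial k = (n + m).choose n * m.descFactorial k := by
  have h := Nat.choose_mul (n := n + m) (k := n + m - k) (s := n) (by omega)
  rw [Nat.choose_symm (by omega), show n + m - k - n = m - k by omega,
    show n + m - n = m by omega, Nat.choose_symm hk] at h
  rw [Nat.descFactorial_eq_factorial_mul_choose, Nat.descFactorial_eq_factorial_mul_choose,
    mul_left_comm ((n + m).choose n), ← h]
  ring

lemma gchoose_eq_descPochhammer_eval_div (y : ℝ) (k : ℕ) :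
    gchoose y k = (descPochhammer ℝ k).eval y / k.factorial := by
  rw [gchoose, descPochhammer_eval_eq_prod_range]

lemma poch_neg (y : ℝ) (k : ℕ) : poch (-y) k = (-1) ^ k * (descPochhammer ℝ k).eval y := by
  have h := prod_neg (s := range k) fun i : ℕ => y - i
  rw [card_range] at h
  rw [poch, descPochhammer_eval_eq_prod_range, ← h]
  exact prod_congr rfl fun i _ => by ring

lemma poch_neg_natCast (n k : ℕ) : poch (-n) k = (-1) ^ k * n.descFactorial k := by
  rw [poch_neg, descPochhammer_eval_eq_descFactorial]

theorem stmt19_general (m₁ m₂ : ℕ) (x : ℝ) :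
    (1 / ((m₁ + m₂).choose m₂ : ℝ)) * ∑ k ∈ Finset.range (m₁ + 1),
        ((m₂ + m₁ - k).choose m₂ : ℝ) * gchoose ((m₂ + m₁ : ℝ) / 2) k * x ^ k
      = ∑ k ∈ Finset.range (m₁ + 1),
          poch (-(m₁ + m₂ : ℝ) / 2) k * poch (-(m₁ : ℝ)) k / poch (-(m₁ : ℝ) - (m₂ : ℝ)) k
            * (-x) ^ k / (Nat.factorial k) := by
  rw [mul_sum]
  refine sum_congr rfl fun k hk => ?_
  have hkm : k ≤ m₁ := Nat.lt_succ_iff.mp (mem_range.mp hk)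
  have key : ((m₂ + m₁ - k).choose m₂ : ℝ) * (m₂ + m₁).descFactorial k
      = (m₂ + m₁).choose m₂ * m₁.descFactorial k := by
    exact_mod_cast Nat.choose_add_sub_mul_descFactorial hkm
  have hchoose : ((m₂ + m₁).choose m₂ : ℝ) ≠ 0 := by
    exact_mod_cast (Nat.choose_pos (by omega)).ne'
  have hdesc : ((m₂ + m₁).descFactorial k : ℝ) ≠ 0 := by
    exact_mod_cast (Nat.descFactorial_pos.mpr (by omega)).ne'
  have hsign : (-1 : ℝ) ^ (k * 2) = 1 := by rw [pow_mul']; simp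
  rw [show -(m₁ + m₂ : ℝ) / 2 = -((m₂ + m₁ : ℝ) / 2) by ring,
    show -(m₁ : ℝ) - m₂ = -((m₂ + m₁ : ℕ) : ℝ) by push_cast; ring,
    poch_neg, poch_neg_natCast, poch_neg_natCast, gchoose_eq_descPochhammer_eval_div, neg_pow x,
    add_comm m₁ m₂]
  field_simp
  linear_combination x ^ k * (descPochhammer ℝ k).eval ((m₂ + m₁ : ℝ) / 2) * key
    - x ^ k * (descPochhammer ℝ k).eval ((m₂ + m₁ : ℝ) / 2) * (m₂ + m₁).choose m₂
      * m₁.descFactorial k * hsign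

theorem stmt19 (m₁ m₂ : ℕ) (x : ℝ) (hx : |x| < 1) :
    (1 / ((m₁ + m₂).choose m₂ : ℝ)) * ∑ k ∈ Finset.range (m₁ + 1),
        ((m₂ + m₁ - k).choose m₂ : ℝ) * gchoose ((m₂ + m₁ : ℝ) / 2) k * x ^ k
      = ∑ k ∈ Finset.range (m₁ + 1),
          poch (-(m₁ + m₂ : ℝ) / 2) k * poch (-(m₁ : ℝ)) k / poch (-(m₁ : ℝ) - (m₂ : ℝ)) k
            * (-x) ^ k / (Nat.factorial k) :=
  stmt19_general m₁ m₂ x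
end
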